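/- Let (V,Ω) be a symplectic vector space, (W₁,π₁), (W₂,π₂) Poisson vector spaces, and J₁: V → W₁, J₂: V → W₂ linear Poisson maps forming a linear dual pair, i.e., (ker J₁)^Ω = ker J₂. Let B₁, B₂ be skew-symmetric bilinear forms on W₁, W₂ respectively, and set Ω̂ = Ω + J₁*B₁ + J₂*B₂. Then: (i) J₁ and J₂ are forward Dirac maps from (V, graph Ω̂) to (W₁, τ_{B₁}(graph π₁)) and (W₂, τ_{B₂}(graph π₂)) respectively; (ii) Ω̂ is nondegenerate if and only if both τ_{B₁}(graph π₁) and τ_{B₂}(graph π₂) are graphs of bivectors; (iii) (ker J₁)^Ω̂ = ker J₂ + ker Ω̂. -/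

import Mathlib

/-!
The graph of `Ω̂ = Ω + J₁*B₁ + J₂*B₂` is the gauge transform of `graph Ω` by `J₁*B₁ + J₂*B₂`.
Forward images along `J₁` turn a gauge transformation by a pulled-back form `J₁*B₁` into one
by `B₁`, while the term `J₂*B₂` is invisible to `J₁`: for a symplectic `Ω` the dual pair condition
is symmetric, so every `J₂*κ` is `Ω z` with `z ∈ ker J₁`, and every `x` with `Ω x ∈ im J₁*` lies
in `ker J₂`. This gives (i). For (ii), `(w, 0)` lies in the forward image of `graph Ω̂` exactly
when `w ∈ J₁ (ker Ω̂)`, and `Ω̂` agrees with the injective `Ω` on `ker J₁ ∩ ker J₂`. For (iii),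
if `x ∈ (ker J₁)^Ω̂` then `Ω̂ x = J₁*η`, and (i) provides `z ∈ ker J₂` with `Ω̂ z = Ω̂ x`.
-/

open Module LinearMap

variable {V W U : Type*} [AddCommGroup V] [Module ℝ V] [FiniteDimensional ℝ V]
  [AddCommGroup W] [Module ℝ W] [FiniteDimensional ℝ W]
  [AddCommGroup U] [Module ℝ U] [FiniteDimensional ℝ U]

/-- The canonical symmetric pairing on `V ⊕ V*`. -/
noncomputable def diracPairing (p q : V × Module.Dual ℝ V) : ℝ := (p.2 q.1 + q.2 p.1) / 2

/-- A subspace of `V ⊕ V*` is isotropic if the pairing vanishes on it. -/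
def IsIsotropic (L : Submodule ℝ (V × Module.Dual ℝ V)) : Prop :=
  ∀ p ∈ L, ∀ q ∈ L, diracPairing p q = 0

/-- A Dirac structure: a maximally isotropic subspace. -/
def IsDirac (L : Submodule ℝ (V × Module.Dual ℝ V)) : Prop :=
  IsIsotropic L ∧ ∀ L' : Submodule ℝ (V × Module.Dual ℝ V), IsIsotropic L' → L ≤ L' → L' = L

/-- The graph of a bivector `π : V* → V`. -/
def graphBiv (π : Module.Dual ℝ V →ₗ[ℝ] V) : Submodule ℝ (V × Module.Dual ℝ V) where
  carrier := {p | p.1 = π p.2}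
  add_mem' := by
    intro a b ha hb
    simp only [Set.mem_setOf_eq, Prod.fst_add, Prod.snd_add, map_add] at *
    rw [ha, hb]
  zero_mem' := by simp
  smul_mem' := by
    intro c a ha
    simp only [Set.mem_setOf_eq, Prod.smul_fst, Prod.smul_snd, map_smul] at *
    rw [ha]

/-- Forward image of a Dirac structure along a linear map. -/
def Fwd (φ : V →ₗ[ℝ] W) (L : Submodule ℝ (V × Module.Dual ℝ V)) :
    Submodule ℝ (W × Module.Dual ℝ W) where
  carrier := {q | ∃ x : V, q.1 = φ x ∧ (x, φ.dualMap q.2) ∈ L}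
  add_mem' := by
    rintro a b ⟨x, hx, hxL⟩ ⟨y, hy, hyL⟩
    refine ⟨x + y, ?_, ?_⟩
    · simp [Prod.fst_add, hx, hy]
    · simpa [Prod.snd_add, Prod.mk_add_mk] using L.add_mem hxL hyL
  zero_mem' := ⟨0, by simp, by simpa [Prod.mk_zero_zero] using L.zero_mem⟩
  smul_mem' := by
    rintro c a ⟨x, hx, hxL⟩
    refine ⟨c • x, ?_, ?_⟩
    · simp [Prod.smul_fst, hx]
    · simpa [Prod.smul_snd, Prod.smul_mk] using L.smul_mem c hxL

/-- Backward image of a Dirac structure along a linear map. -/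
def Bwd (φ : V →ₗ[ℝ] W) (L : Submodule ℝ (W × Module.Dual ℝ W)) :
    Submodule ℝ (V × Module.Dual ℝ V) where
  carrier := {p | ∃ η : Module.Dual ℝ W, p.2 = φ.dualMap η ∧ (φ p.1, η) ∈ L}
  add_mem' := by
    rintro a b ⟨x, hx, hxL⟩ ⟨y, hy, hyL⟩
    refine ⟨x + y, ?_, ?_⟩
    · simp [Prod.snd_add, hx, hy]
    · simpa [Prod.fst_add, Prod.mk_add_mk] using L.add_mem hxL hyL
  zero_mem' := ⟨0, by simp, by simpa [Prod.mk_zero_zero] using L.zero_mem⟩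
  smul_mem' := by
    rintro c a ⟨x, hx, hxL⟩
    refine ⟨c • x, ?_, ?_⟩
    · simp [Prod.smul_snd, hx]
    · simpa [Prod.smul_fst, Prod.smul_mk] using L.smul_mem c hxL

/-- Gauge transformation of a Dirac structure by a 2-form `B : V → V*`. -/
def tau (B : V →ₗ[ℝ] Module.Dual ℝ V) (L : Submodule ℝ (V × Module.Dual ℝ V)) :
    Submodule ℝ (V × Module.Dual ℝ V) where
  carrier := {p | (p.1, p.2 - B p.1) ∈ L}
  add_mem' := by
    intro a b ha hb
    have := L.add_mem ha hb
    simpa [Prod.mk_add_mk, Prod.fst_add, Prod.snd_add, map_add, add_sub_add_comm] using this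
  zero_mem' := by simpa [Prod.mk_zero_zero] using L.zero_mem
  smul_mem' := by
    intro c a ha
    have := L.smul_mem c ha
    simpa [Prod.smul_mk, Prod.smul_fst, Prod.smul_snd, smul_sub] using this

/-- Orthogonal of a subspace with respect to a bilinear form `Ω : V → V*`. -/
def orth (Ω : V →ₗ[ℝ] Module.Dual ℝ V) (S : Submodule ℝ V) : Submodule ℝ V where
  carrier := {x | ∀ y ∈ S, Ω x y = 0}
  add_mem' := by
    intro a b ha hb y hy
    simp [map_add, ha y hy, hb y hy]
  zero_mem' := by simp
  smul_mem' := by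
    intro c a ha y hy
    simp [ha y hy]

/-- Pullback of a 2-form along a linear map. -/
def pb (φ : V →ₗ[ℝ] W) (B : W →ₗ[ℝ] Module.Dual ℝ W) : V →ₗ[ℝ] Module.Dual ℝ V :=
  φ.dualMap ∘ₗ B ∘ₗ φ

/-- The Dirac structure associated to a pair `(R, Ω)` of a subspace and a skew form on it. -/
def diracOfForm (R : Submodule ℝ V) (Ω : R →ₗ[ℝ] Module.Dual ℝ R) :
    Submodule ℝ (V × Module.Dual ℝ V) where
  carrier := {p | ∃ hx : p.1 ∈ R, ∀ y : R, p.2 y = Ω ⟨p.1, hx⟩ y}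
  add_mem' := by
    rintro a b ⟨ha, Ha⟩ ⟨hb, Hb⟩
    refine ⟨R.add_mem ha hb, fun y => ?_⟩
    have h : (⟨(a + b).1, R.add_mem ha hb⟩ : R) = ⟨a.1, ha⟩ + ⟨b.1, hb⟩ := rfl
    rw [h, map_add]
    simp [Prod.snd_add, Ha y, Hb y]
  zero_mem' := by
    refine ⟨R.zero_mem, fun y => ?_⟩
    have h : (⟨((0 : V × Module.Dual ℝ V)).1, R.zero_mem⟩ : R) = 0 := rfl
    rw [h, map_zero]
    rfl
  smul_mem' := by
    rintro c a ⟨ha, Ha⟩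
    refine ⟨R.smul_mem c ha, fun y => ?_⟩
    have h : (⟨(c • a).1, R.smul_mem c ha⟩ : R) = c • ⟨a.1, ha⟩ := rfl
    rw [h, map_smul]
    simp [Prod.smul_snd, Ha y]

section DiracGauge

variable {E F G : Type*} [AddCommGroup E] [Module ℝ E] [AddCommGroup F] [Module ℝ F]
  [AddCommGroup G] [Module ℝ G]

@[simp]
theorem pb_apply (φ : E →ₗ[ℝ] F) (B : F →ₗ[ℝ] Dual ℝ F) (x : E) :
    pb φ B x = φ.dualMap (B (φ x)) := rfl

theorem graph_add_eq_tau (A β : E →ₗ[ℝ] Dual ℝ E) : graph (A + β) = tau β (graph A) := by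
  ext ⟨x, ξ⟩
  exact sub_eq_iff_eq_add.symm

theorem fwd_tau_pb (φ : E →ₗ[ℝ] F) (B : F →ₗ[ℝ] Dual ℝ F) (L : Submodule ℝ (E × Dual ℝ E)) :
    Fwd φ (tau (pb φ B) L) = tau B (Fwd φ L) := by
  ext ⟨w, η⟩
  refine exists_congr fun x => and_congr_right fun hw => ?_
  obtain rfl : w = φ x := hw
  change (x, φ.dualMap η - φ.dualMap (B (φ x))) ∈ L ↔ (x, φ.dualMap (η - B (φ x))) ∈ L
  rw [map_sub]

theorem mem_orth_ker_of_apply_eq_dualMap {Ω : E →ₗ[ℝ] Dual ℝ E} {φ : E →ₗ[ℝ] F} {x : E}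
    {μ : Dual ℝ F} (h : Ω x = φ.dualMap μ) : x ∈ orth Ω (ker φ) := fun y hy => by
  rw [h, dualMap_apply, mem_ker.mp hy, map_zero]

theorem orth_orth [FiniteDimensional ℝ E] {Ω : E →ₗ[ℝ] Dual ℝ E}
    (hΩ : ∀ x y : E, Ω x y = - Ω y x) (hnd : ker Ω = ⊥) (S : Submodule ℝ E) :
    orth Ω (orth Ω S) = S := by
  have hrefl : Ω.IsRefl := fun x y hxy => by rw [hΩ, hxy, neg_zero]
  have hnd' : BilinForm.Nondegenerate Ω :=
    hrefl.nondegenerate_iff_separatingLeft.mpr (separatingLeft_iff_ker_eq_bot.mpr hnd)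
  have horth : ∀ T, orth Ω T = BilinForm.orthogonal Ω T := fun T =>
    Submodule.ext fun x => forall₂_congr fun y _ => BilinForm.IsRefl.eq_iff hrefl
  rw [horth, horth, BilinForm.orthogonal_orthogonal hnd' hrefl]

theorem forall_mem_fwd_graph_zero_iff (φ : E →ₗ[ℝ] F) (A : E →ₗ[ℝ] Dual ℝ E) :
    (∀ w : F, (w, (0 : Dual ℝ F)) ∈ Fwd φ (graph A) → w = 0) ↔ ker A ≤ ker φ := by
  constructor
  · intro h x hx
    exact h _ ⟨x, rfl, by rw [mem_graph_iff, map_zero, mem_ker.mp hx]⟩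
  · rintro h w ⟨x, hw : w = φ x, hx⟩
    rw [mem_graph_iff, map_zero] at hx
    rw [hw]
    exact h hx.symm

variable {Ω : E →ₗ[ℝ] Dual ℝ E} {J : E →ₗ[ℝ] F} {J' : E →ₗ[ℝ] G}

theorem ker_add_pb_add_pb_eq_bot_iff (hnd : ker Ω = ⊥) (B : F →ₗ[ℝ] Dual ℝ F)
    (B' : G →ₗ[ℝ] Dual ℝ G) :
    ker (Ω + pb J B + pb J' B') = ⊥ ↔
      ker (Ω + pb J B + pb J' B') ≤ ker J ∧ ker (Ω + pb J B + pb J' B') ≤ ker J' := by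
  refine ⟨fun h => by simp [h], fun ⟨hJ, hJ'⟩ => eq_bot_iff.mpr fun x hx => ?_⟩
  have hΩx : Ω x = 0 := by
    simpa [mem_ker.mp (hJ hx), mem_ker.mp (hJ' hx)] using mem_ker.mp hx
  exact hnd ▸ mem_ker.mpr hΩx

variable (hsurj : Function.Surjective Ω) (h : orth Ω (ker J) = ker J')
  (h' : orth Ω (ker J') = ker J)
include hsurj h h'

theorem fwd_graph_add_pb_eq (B' : G →ₗ[ℝ] Dual ℝ G) :
    Fwd J (graph (Ω + pb J' B')) = Fwd J (graph Ω) := by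
  ext ⟨w, η⟩
  constructor
  · rintro ⟨x, hw, hx⟩
    obtain ⟨c, hc⟩ := hsurj (pb J' B' x)
    have hcJ : J c = 0 := mem_ker.mp (h' ▸ mem_orth_ker_of_apply_eq_dualMap hc)
    refine ⟨x + c, by rw [map_add, hcJ, add_zero]; exact hw, ?_⟩
    rw [mem_graph_iff] at hx ⊢
    rw [map_add, hc]
    exact hx
  · rintro ⟨x, hw, hx⟩
    rw [mem_graph_iff] at hx
    have hxJ' : J' x = 0 := mem_ker.mp (h ▸ mem_orth_ker_of_apply_eq_dualMap hx.symm)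
    refine ⟨x, hw, ?_⟩
    simpa [hxJ'] using hx

theorem fwd_graph_add_pb_add_pb (B : F →ₗ[ℝ] Dual ℝ F) (B' : G →ₗ[ℝ] Dual ℝ G) :
    Fwd J (graph (Ω + pb J B + pb J' B')) = tau B (Fwd J (graph Ω)) := by
  rw [add_right_comm, graph_add_eq_tau, fwd_tau_pb, fwd_graph_add_pb_eq hsurj h h']

theorem orth_add_pb_add_pb_ker (B : F →ₗ[ℝ] Dual ℝ F) (B' : G →ₗ[ℝ] Dual ℝ G) :
    orth (Ω + pb J B + pb J' B') (ker J) = ker J' ⊔ ker (Ω + pb J B + pb J' B') := by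
  refine le_antisymm (fun x hx => ?_) (sup_le (fun x hx y hy => ?_) fun x hx y _ => ?_)
  · obtain ⟨η, hη⟩ : (Ω + pb J B + pb J' B') x ∈ range J.dualMap := by
      rw [range_dualMap_eq_dualAnnihilator_ker]
      exact (Submodule.mem_dualAnnihilator _).mpr hx
    obtain ⟨z, hJz : J x = J z, hz⟩ : (J x, η) ∈ tau B (Fwd J (graph Ω)) := by
      rw [← fwd_graph_add_pb_add_pb hsurj h h' B B']
      exact ⟨x, rfl, (mem_graph_iff _ _).mpr hη⟩
    rw [mem_graph_iff] at hz
    have hJ'z : J' z = 0 := mem_ker.mp (h ▸ mem_orth_ker_of_apply_eq_dualMap hz.symm)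
    have hzx : (Ω + pb J B + pb J' B') z = (Ω + pb J B + pb J' B') x := by
      simp only [LinearMap.add_apply, pb_apply, ← hz, ← hJz, hJ'z, map_zero, add_zero, hη,
        ← map_add, sub_add_cancel]
    rw [← add_sub_cancel z x]
    exact Submodule.add_mem_sup hJ'z (by rw [mem_ker, map_sub, hzx, sub_self])
  · simp [mem_ker.mp hx, mem_ker.mp hy, (h ▸ hx : x ∈ orth Ω (ker J)) y hy]
  · rw [mem_ker.mp hx, LinearMap.zero_apply]

end DiracGauge

theorem stmt_17_general (Ω : V →ₗ[ℝ] Module.Dual ℝ V) (hΩ : ∀ x y : V, Ω x y = - Ω y x)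
    (hnd : LinearMap.ker Ω = ⊥)
    (π₁ : Module.Dual ℝ W →ₗ[ℝ] W)
    (π₂ : Module.Dual ℝ U →ₗ[ℝ] U)
    (J₁ : V →ₗ[ℝ] W) (J₂ : V →ₗ[ℝ] U)
    (hJ₁ : Fwd J₁ (LinearMap.graph Ω) = graphBiv π₁)
    (hJ₂ : Fwd J₂ (LinearMap.graph Ω) = graphBiv π₂)
    (hdual : orth Ω (LinearMap.ker J₁) = LinearMap.ker J₂)
    (B₁ : W →ₗ[ℝ] Module.Dual ℝ W)
    (B₂ : U →ₗ[ℝ] Module.Dual ℝ U) :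
    -- (i) J₁ and J₂ are forward Dirac maps for the gauge-transformed structures
    (Fwd J₁ (LinearMap.graph (Ω + pb J₁ B₁ + pb J₂ B₂)) = tau B₁ (graphBiv π₁) ∧
      Fwd J₂ (LinearMap.graph (Ω + pb J₁ B₁ + pb J₂ B₂)) = tau B₂ (graphBiv π₂)) ∧
    -- (ii) Ω̂ is nondegenerate iff both gauge transforms are graphs of bivectors
    (LinearMap.ker (Ω + pb J₁ B₁ + pb J₂ B₂) = ⊥ ↔
      ((∀ w : W, (w, (0 : Module.Dual ℝ W)) ∈ tau B₁ (graphBiv π₁) → w = 0) ∧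
       (∀ u : U, (u, (0 : Module.Dual ℝ U)) ∈ tau B₂ (graphBiv π₂) → u = 0))) ∧
    -- (iii) (ker J₁)^Ω̂ = ker J₂ + ker Ω̂
    orth (Ω + pb J₁ B₁ + pb J₂ B₂) (LinearMap.ker J₁) =
      LinearMap.ker J₂ ⊔ LinearMap.ker (Ω + pb J₁ B₁ + pb J₂ B₂) := by
  have hsurj : Function.Surjective Ω :=
    (injective_iff_surjective_of_finrank_eq_finrank Subspace.dual_finrank_eq.symm).mp
      (ker_eq_bot.mp hnd)
  have hdual' : orth Ω (ker J₂) = ker J₁ := by rw [← hdual, orth_orth hΩ hnd]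
  have hi₁ : Fwd J₁ (graph (Ω + pb J₁ B₁ + pb J₂ B₂)) = tau B₁ (graphBiv π₁) := by
    rw [fwd_graph_add_pb_add_pb hsurj hdual hdual', hJ₁]
  have hi₂ : Fwd J₂ (graph (Ω + pb J₁ B₁ + pb J₂ B₂)) = tau B₂ (graphBiv π₂) := by
    rw [add_right_comm, fwd_graph_add_pb_add_pb hsurj hdual' hdual, hJ₂]
  refine ⟨⟨hi₁, hi₂⟩, ?_, orth_add_pb_add_pb_ker hsurj hdual hdual' B₁ B₂⟩
  rw [← hi₁, ← hi₂, forall_mem_fwd_graph_zero_iff, forall_mem_fwd_graph_zero_iff]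
  exact ker_add_pb_add_pb_eq_bot_iff hnd B₁ B₂

/-- Gauge transformations on both legs of a linear dual pair. -/
theorem stmt_17 (Ω : V →ₗ[ℝ] Module.Dual ℝ V) (hΩ : ∀ x y : V, Ω x y = - Ω y x)
    (hnd : LinearMap.ker Ω = ⊥)
    (π₁ : Module.Dual ℝ W →ₗ[ℝ] W) (hπ₁ : ∀ η ν : Module.Dual ℝ W, η (π₁ ν) = - ν (π₁ η))
    (π₂ : Module.Dual ℝ U →ₗ[ℝ] U) (hπ₂ : ∀ η ν : Module.Dual ℝ U, η (π₂ ν) = - ν (π₂ η))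
    (J₁ : V →ₗ[ℝ] W) (J₂ : V →ₗ[ℝ] U)
    (hJ₁ : Fwd J₁ (LinearMap.graph Ω) = graphBiv π₁)
    (hJ₂ : Fwd J₂ (LinearMap.graph Ω) = graphBiv π₂)
    (hdual : orth Ω (LinearMap.ker J₁) = LinearMap.ker J₂)
    (B₁ : W →ₗ[ℝ] Module.Dual ℝ W) (hB₁ : ∀ x y : W, B₁ x y = - B₁ y x)
    (B₂ : U →ₗ[ℝ] Module.Dual ℝ U) (hB₂ : ∀ x y : U, B₂ x y = - B₂ y x) :
    -- (i) J₁ and J₂ are forward Dirac maps for the gauge-transformed structures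
    (Fwd J₁ (LinearMap.graph (Ω + pb J₁ B₁ + pb J₂ B₂)) = tau B₁ (graphBiv π₁) ∧
      Fwd J₂ (LinearMap.graph (Ω + pb J₁ B₁ + pb J₂ B₂)) = tau B₂ (graphBiv π₂)) ∧
    -- (ii) Ω̂ is nondegenerate iff both gauge transforms are graphs of bivectors
    (LinearMap.ker (Ω + pb J₁ B₁ + pb J₂ B₂) = ⊥ ↔
      ((∀ w : W, (w, (0 : Module.Dual ℝ W)) ∈ tau B₁ (graphBiv π₁) → w = 0) ∧
       (∀ u : U, (u, (0 : Module.Dual ℝ U)) ∈ tau B₂ (graphBiv π₂) → u = 0))) ∧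
    -- (iii) (ker J₁)^Ω̂ = ker J₂ + ker Ω̂
    orth (Ω + pb J₁ B₁ + pb J₂ B₂) (LinearMap.ker J₁) =
      LinearMap.ker J₂ ⊔ LinearMap.ker (Ω + pb J₁ B₁ + pb J₂ B₂) :=
  stmt_17_general Ω hΩ hnd π₁ π₂ J₁ J₂ hJ₁ hJ₂ hdual B₁ B₂
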